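/- Exponential tracking of the Newton prediction-correction flow: under the same smoothness and uniform strong convexity assumptions (∇_yy f_u ≽ q_c·I), if y(t) evolves according to ẏ = -(∇_yy f_u(y,t))⁻¹ ( γ ∇_y f_u(y,t) + ∇_yt f_u(y,t) ), then σ(t) = ∇_y f_u(y(t), t) satisfies d/dt σ(t) = -γ σ(t), so ‖σ(t)‖ = ‖σ(t₀)‖ e^{-γ(t-t₀)} and ‖y(t) - y*(t)‖ ≤ (‖σ(t₀)‖/q_c) e^{-γ(t-t₀)}. -/

import Mathlib

/-!
By the chain rule the residual `σ(s) = ∇_y F(y(s), s)` has derivative `∇_yy F · ẏ + ∇_yt F`, and the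
Newton direction `ẏ` is chosen exactly so that this equals `-γ σ`, whatever the Hessian; hence
`e^{γ(s - t₀)} σ(s)` is constant. The lower bound `q_c` on the Hessian makes `∇_y F` strongly
monotone, `q_c ‖a - b‖² ≤ ⟪∇_y F a - ∇_y F b, a - b⟫`, so `q_c ‖y - y*‖ ≤ ‖σ‖` by Cauchy–Schwarz.
-/

open scoped RealInnerProductSpace

section ChainRule

variable {𝕜 E F : Type*} [NontriviallyNormedField 𝕜] [NormedAddCommGroup E] [NormedSpace 𝕜 E]
  [NormedAddCommGroup F] [NormedSpace 𝕜 F]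

theorem HasFDerivAt.hasDerivAt_comp_prodMk_of_partials {G : E × 𝕜 → F} {G' : E × 𝕜 →L[𝕜] F}
    {A : E →L[𝕜] F} {b : F} {y : 𝕜 → E} {v : E} {t : 𝕜}
    (hG : HasFDerivAt G G' (y t, t))
    (hA : HasFDerivAt (fun z => G (z, t)) A (y t))
    (hb : HasDerivAt (fun s => G (y t, s)) b t)
    (hy : HasDerivAt y v t) :
    HasDerivAt (fun s => G (y s, s)) (A v + b) t := by
  have hGA : G'.comp (ContinuousLinearMap.inl 𝕜 E 𝕜) = A :=
    (hG.comp (y t) (hasFDerivAt_prodMk_left (y t) t)).unique hA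
  have hGb : G' (0, 1) = b :=
    (hG.comp_hasDerivAt (f := fun s => (y t, s)) t
      ((hasDerivAt_const t (y t)).prodMk (hasDerivAt_id t))).unique hb
  have hsplit : G' (v, 1) = A v + b := by
    rw [← hGA, ← hGb, ContinuousLinearMap.comp_apply, ContinuousLinearMap.inl_apply, ← map_add,
      Prod.mk_add_mk, add_zero, zero_add]
  exact hsplit ▸ hG.comp_hasDerivAt (f := fun s => (y s, s)) t (hy.prodMk (hasDerivAt_id t))

end ChainRule

section InnerProductSpace

variable {E : Type*} [NormedAddCommGroup E] [InnerProductSpace ℝ E]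

theorem ContDiff.gradient_fst [CompleteSpace E] {T : Type*} [NormedAddCommGroup T]
    [NormedSpace ℝ T] {F : E → T → ℝ} {n : WithTop ℕ∞}
    (hF : ContDiff ℝ (n + 1) (fun p : E × T => F p.1 p.2)) :
    ContDiff ℝ n (fun p : E × T => gradient (fun w => F w p.2) p.1) := by
  have hpartial : ∀ p : E × T, HasFDerivAt (fun w => F w p.2)
      ((fderiv ℝ (fun p : E × T => F p.1 p.2) p).comp (ContinuousLinearMap.inl ℝ E T)) p.1 :=
    fun p => ((hF.differentiable (by simp)) p).hasFDerivAt.comp (f := fun w => (w, p.2)) p.1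
      (hasFDerivAt_prodMk_left p.1 p.2)
  simp only [fun p => (hasFDerivAt_iff_hasGradientAt.mp (hpartial p)).gradient]
  exact (InnerProductSpace.toDual ℝ E).symm.toContinuousLinearEquiv.contDiff.comp
    ((hF.fderiv_right le_rfl).clm_comp contDiff_const)

theorem mul_sq_norm_sub_le_inner_sub_of_hasFDerivAt {g : E → E} {H : E → E →L[ℝ] E} {q : ℝ}
    (hg : ∀ x, HasFDerivAt g (H x) x) (hH : ∀ x v, q * ‖v‖ ^ 2 ≤ ⟪H x v, v⟫) (a b : E) :
    q * ‖a - b‖ ^ 2 ≤ ⟪g a - g b, a - b⟫ := by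
  set d := a - b
  have hφ : ∀ θ : ℝ, HasDerivAt (fun θ : ℝ => ⟪g (b + θ • d), d⟫) ⟪H (b + θ • d) d, d⟫ θ := by
    intro θ
    have hpath : HasDerivAt (fun θ : ℝ => b + θ • d) d θ := by
      simpa using ((hasDerivAt_id θ).smul_const d).const_add b
    simpa using ((hg _).comp_hasDerivAt θ hpath).inner ℝ (hasDerivAt_const θ d)
  have := mul_sub_le_image_sub_of_le_deriv (fun θ => (hφ θ).differentiableAt)
    (fun θ => (hφ θ).deriv ▸ hH (b + θ • d) d) zero_le_one
  simpa [d, inner_sub_left] using this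

theorem mul_norm_sub_le_norm_sub_of_hasFDerivAt {g : E → E} {H : E → E →L[ℝ] E} {q : ℝ}
    (hg : ∀ x, HasFDerivAt g (H x) x) (hH : ∀ x v, q * ‖v‖ ^ 2 ≤ ⟪H x v, v⟫) (a b : E) :
    q * ‖a - b‖ ≤ ‖g a - g b‖ := by
  rcases eq_or_ne a b with rfl | hab
  · simp
  refine le_of_mul_le_mul_right ?_ (norm_pos_iff.mpr (sub_ne_zero.mpr hab))
  calc q * ‖a - b‖ * ‖a - b‖ = q * ‖a - b‖ ^ 2 := by ring
    _ ≤ ⟪g a - g b, a - b⟫ := mul_sq_norm_sub_le_inner_sub_of_hasFDerivAt hg hH a b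
    _ ≤ ‖g a - g b‖ * ‖a - b‖ := real_inner_le_norm _ _

end InnerProductSpace

theorem eq_exp_smul_of_hasDerivAt_neg_smul {V : Type*} [NormedAddCommGroup V] [NormedSpace ℝ V]
    {σ : ℝ → V} {γ : ℝ} (hσ : ∀ s, HasDerivAt σ (-(γ • σ s)) s) (t₀ t : ℝ) :
    σ t = Real.exp (-γ * (t - t₀)) • σ t₀ := by
  have hconst : ∀ s, HasDerivAt (fun s => Real.exp (γ * (s - t₀)) • σ s) 0 s := by
    intro s
    have hexp : HasDerivAt (fun s => Real.exp (γ * (s - t₀))) (Real.exp (γ * (s - t₀)) * γ) s := by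
      simpa using (((hasDerivAt_id s).sub_const t₀).const_mul γ).exp
    have := hexp.smul (hσ s)
    rwa [smul_neg, smul_smul, mul_comm, neg_add_cancel] at this
  have := is_const_of_deriv_eq_zero (fun s => (hconst s).differentiableAt)
    (fun s => (hconst s).deriv) t t₀
  simp only [sub_self, mul_zero, Real.exp_zero, one_smul] at this
  rw [← this, smul_smul, ← Real.exp_add, neg_mul, neg_add_cancel, Real.exp_zero, one_smul]

theorem newton_prediction_correction_tracking_general (m : ℕ) (t0 γ qc : ℝ)
    (hqc : 0 < qc)
    (F : EuclideanSpace ℝ (Fin m) → ℝ → ℝ)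
    (hF : ContDiff ℝ 2 (fun p : EuclideanSpace ℝ (Fin m) × ℝ => F p.1 p.2))
    (Hyy : EuclideanSpace ℝ (Fin m) → ℝ →
      (EuclideanSpace ℝ (Fin m) →L[ℝ] EuclideanSpace ℝ (Fin m)))
    (Hyt : EuclideanSpace ℝ (Fin m) → ℝ → EuclideanSpace ℝ (Fin m))
    (hHyy : ∀ y t, HasFDerivAt (fun z => gradient (fun w => F w t) z) (Hyy y t) y)
    (hHyt : ∀ y t, HasDerivAt (fun s => gradient (fun w => F w s) y) (Hyt y t) t)
    (hstrong : ∀ y t (v : EuclideanSpace ℝ (Fin m)),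
      qc * ‖v‖ ^ 2 ≤ ⟪Hyy y t v, v⟫)
    (Hinv : EuclideanSpace ℝ (Fin m) → ℝ →
      (EuclideanSpace ℝ (Fin m) →L[ℝ] EuclideanSpace ℝ (Fin m)))
    (hHinv : ∀ y t, (Hinv y t).comp (Hyy y t) = ContinuousLinearMap.id ℝ _ ∧
      (Hyy y t).comp (Hinv y t) = ContinuousLinearMap.id ℝ _)
    (y : ℝ → EuclideanSpace ℝ (Fin m))
    (hdyn : ∀ t, HasDerivAt y
      (-(Hinv (y t) t (γ • gradient (fun w => F w t) (y t) + Hyt (y t) t))) t)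
    (ystar : ℝ → EuclideanSpace ℝ (Fin m))
    (hystar : ∀ t, gradient (fun w => F w t) (ystar t) = 0) :
    ∀ t, t0 ≤ t →
      HasDerivAt (fun s => gradient (fun w => F w s) (y s))
        (-(γ • gradient (fun w => F w t) (y t))) t ∧
      ‖gradient (fun w => F w t) (y t)‖ =
        ‖gradient (fun w => F w t0) (y t0)‖ * Real.exp (-γ * (t - t0)) ∧
      ‖y t - ystar t‖ ≤
        (‖gradient (fun w => F w t0) (y t0)‖ / qc) *
          Real.exp (-γ * (t - t0)) := by
  set σ := fun s => gradient (fun w => F w s) (y s)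
  have hgrad : ContDiff ℝ 1 (fun p : EuclideanSpace ℝ (Fin m) × ℝ =>
      gradient (fun w => F w p.2) p.1) := ContDiff.gradient_fst hF
  have hσ : ∀ s, HasDerivAt σ (-(γ • σ s)) s := by
    intro s
    have hHyy_Hinv := DFunLike.congr_fun (hHinv (y s) s).2 (γ • σ s + Hyt (y s) s)
    simp only [ContinuousLinearMap.comp_apply, ContinuousLinearMap.id_apply] at hHyy_Hinv
    have := (hgrad.differentiable_one _).hasFDerivAt.hasDerivAt_comp_prodMk_of_partials
      (hHyy (y s) s) (hHyt (y s) s) (hdyn s)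
    rwa [map_neg, hHyy_Hinv, neg_add, neg_add_cancel_right] at this
  intro t _
  have hnorm : ‖σ t‖ = ‖σ t0‖ * Real.exp (-γ * (t - t0)) := by
    rw [eq_exp_smul_of_hasDerivAt_neg_smul hσ t0 t, norm_smul,
      Real.norm_of_nonneg (Real.exp_pos _).le, mul_comm]
  refine ⟨hσ t, hnorm, ?_⟩
  have hdist := mul_norm_sub_le_norm_sub_of_hasFDerivAt (hHyy · t) (hstrong · t) (y t) (ystar t)
  rw [hystar, sub_zero] at hdist
  rw [div_mul_eq_mul_div, le_div_iff₀ hqc, ← hnorm]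
  linarith

/-- Exponential tracking of the gradient prediction-correction flow (Theorem 1,
Newton case): along `ẏ = -(∇_yy f_u)⁻¹(γ∇_y f_u + ∇_yt f_u)`, the residual
`σ(t) = ∇_y f_u(y(t), t)` satisfies `d/dt σ = -γσ`, hence
`‖σ(t)‖ = ‖σ(t₀)‖ e^{-γ(t-t₀)}` and `‖y(t) - y*(t)‖ ≤ (‖σ(t₀)‖/q_c) e^{-γ(t-t₀)}`. -/
theorem newton_prediction_correction_tracking (m : ℕ) (t0 γ qc : ℝ)
    (hγ : 0 < γ) (hqc : 0 < qc)
    (F : EuclideanSpace ℝ (Fin m) → ℝ → ℝ)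
    (hF : ContDiff ℝ 2 (fun p : EuclideanSpace ℝ (Fin m) × ℝ => F p.1 p.2))
    (Hyy : EuclideanSpace ℝ (Fin m) → ℝ →
      (EuclideanSpace ℝ (Fin m) →L[ℝ] EuclideanSpace ℝ (Fin m)))
    (Hyt : EuclideanSpace ℝ (Fin m) → ℝ → EuclideanSpace ℝ (Fin m))
    (hHyy : ∀ y t, HasFDerivAt (fun z => gradient (fun w => F w t) z) (Hyy y t) y)
    (hHyt : ∀ y t, HasDerivAt (fun s => gradient (fun w => F w s) y) (Hyt y t) t)
    (hstrong : ∀ y t (v : EuclideanSpace ℝ (Fin m)),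
      qc * ‖v‖ ^ 2 ≤ ⟪Hyy y t v, v⟫)
    (Hinv : EuclideanSpace ℝ (Fin m) → ℝ →
      (EuclideanSpace ℝ (Fin m) →L[ℝ] EuclideanSpace ℝ (Fin m)))
    (hHinv : ∀ y t, (Hinv y t).comp (Hyy y t) = ContinuousLinearMap.id ℝ _ ∧
      (Hyy y t).comp (Hinv y t) = ContinuousLinearMap.id ℝ _)
    (y : ℝ → EuclideanSpace ℝ (Fin m))
    (hdyn : ∀ t, HasDerivAt y
      (-(Hinv (y t) t (γ • gradient (fun w => F w t) (y t) + Hyt (y t) t))) t)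
    (ystar : ℝ → EuclideanSpace ℝ (Fin m))
    (hystar : ∀ t, gradient (fun w => F w t) (ystar t) = 0) :
    ∀ t, t0 ≤ t →
      HasDerivAt (fun s => gradient (fun w => F w s) (y s))
        (-(γ • gradient (fun w => F w t) (y t))) t ∧
      ‖gradient (fun w => F w t) (y t)‖ =
        ‖gradient (fun w => F w t0) (y t0)‖ * Real.exp (-γ * (t - t0)) ∧
      ‖y t - ystar t‖ ≤
        (‖gradient (fun w => F w t0) (y t0)‖ / qc) *
          Real.exp (-γ * (t - t0)) :=
  newton_prediction_correction_tracking_general m t0 γ qc hqc F hF Hyy Hyt hHyy hHyt hstrong Hinv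
    hHinv y hdyn ystar hystar
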